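/- arXiv:1902.01818 — 2 statements merged into one kernel-verified Lean document; each statement's English description precedes it below -/
import Mathlib

section
/- If A and L are real N×N matrices with A symmetric positive definite and L symmetric positive definite with A ≤ L (in the Loewner order), then for every ν ≥ 0 the smoothing property ‖L^{-1} A (I - L^{-1}A)^ν‖_L ≤ 1/(ν+1) holds, where ‖B‖_L denotes the operator norm induced by the inner product ⟨x,y⟩_L = xᵀ L y. -/
open Matrix Finset

lemma scalar_key (ν : ℕ) {t : ℝ} (h0 : 0 ≤ t) (h1 : t ≤ 1) :
    t * (1 - t) ^ ν ≤ 1 / (ν + 1) := by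
  set s : ℝ := 1 - t with hs
  have hs0 : 0 ≤ s := by simp [hs]; linarith
  have hs1 : s ≤ 1 := by simp [hs]; linarith
  have hpos : (0:ℝ) < (ν:ℝ) + 1 := by positivity
  rw [le_div_iff₀ hpos]
  have hsum : ((ν:ℝ)+1) * s^ν ≤ ∑ k ∈ range (ν+1), s^k := by
    calc ((ν:ℝ)+1) * s^ν = ∑ _k ∈ range (ν+1), s^ν := by
          rw [Finset.sum_const, card_range, nsmul_eq_mul]; push_cast; ring
      _ ≤ ∑ k ∈ range (ν+1), s^k := by
          refine Finset.sum_le_sum fun k hk => ?_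
          exact pow_le_pow_of_le_one hs0 hs1 (by simp at hk; omega)
  have hgeom : (1 - s) * (∑ k ∈ range (ν+1), s^k) = 1 - s^(ν+1) := by
    have := geom_sum_mul s (ν+1)
    nlinarith [this]
  have ht : t = 1 - s := by simp [hs]
  calc t * s^ν * ((ν:ℝ)+1) = t * (((ν:ℝ)+1) * s^ν) := by ring
    _ ≤ t * (∑ k ∈ range (ν+1), s^k) := by
        exact mul_le_mul_of_nonneg_left hsum h0
    _ = 1 - s^(ν+1) := by rw [ht]; exact hgeom
    _ ≤ 1 := by nlinarith [pow_nonneg hs0 (ν+1)]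

section Main

variable {N : ℕ}

lemma udiag_mul (U : Matrix (Fin N) (Fin N) ℝ) (hU : star U * U = 1)
    (d e : Fin N → ℝ) :
    (U * diagonal d * star U) * (U * diagonal e * star U)
      = U * diagonal (fun i => d i * e i) * star U := by
  have : diagonal d * (star U * U) * diagonal e = diagonal (fun i => d i * e i) := by
    rw [hU, mul_one, diagonal_mul_diagonal]
  calc (U * diagonal d * star U) * (U * diagonal e * star U)
      = U * (diagonal d * (star U * U) * diagonal e) * star U := by
        simp only [Matrix.mul_assoc]
    _ = U * diagonal (fun i => d i * e i) * star U := by rw [this]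

lemma udiag_pow (U : Matrix (Fin N) (Fin N) ℝ) (hU : star U * U = 1)
    (hU' : U * star U = 1) (d : Fin N → ℝ) (k : ℕ) :
    (U * diagonal d * star U) ^ k = U * diagonal (fun i => d i ^ k) * star U := by
  induction k with
  | zero => simp [pow_zero, diagonal_one, hU']
  | succ n ih =>
      rw [pow_succ, ih, udiag_mul U hU]
      simp [pow_succ]


lemma dot_shift (M : Matrix (Fin N) (Fin N) ℝ) (u v : Fin N → ℝ) :
    u ⬝ᵥ (M *ᵥ v) = (Mᵀ *ᵥ u) ⬝ᵥ v := by
  rw [dotProduct_mulVec, mulVec_transpose]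

theorem smoothing_property_aux (A L : Matrix (Fin N) (Fin N) ℝ)
    (hA : A.PosDef) (hL : L.PosDef)
    (hAL : ∀ x : Fin N → ℝ, x ⬝ᵥ A.mulVec x ≤ x ⬝ᵥ L.mulVec x)
    (ν : ℕ) :
    ∀ x : Fin N → ℝ,
      ((L⁻¹ * A * (1 - L⁻¹ * A) ^ ν).mulVec x) ⬝ᵥ
          L.mulVec ((L⁻¹ * A * (1 - L⁻¹ * A) ^ ν).mulVec x)
        ≤ (1 / (ν + 1 : ℝ))^2 * (x ⬝ᵥ L.mulVec x) := by
  intro x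
  -- square root of L
  set S := (hL.1.eigenvectorUnitary : Matrix (Fin N) (Fin N) ℝ) *
    diagonal (fun i => Real.sqrt (hL.1.eigenvalues i)) *
    star (hL.1.eigenvectorUnitary : Matrix (Fin N) (Fin N) ℝ) with hSdef
  have hSS : S * S = L := by
    rw [hSdef, udiag_mul _ ((mem_unitaryGroup_iff').mp (IsHermitian.eigenvectorUnitary hL.1).2)]
    have hsq : (fun i => Real.sqrt (hL.1.eigenvalues i) * Real.sqrt (hL.1.eigenvalues i))
        = hL.1.eigenvalues := funext fun i =>
      Real.mul_self_sqrt (hL.posSemidef.eigenvalues_nonneg i)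
    rw [hsq]
    have := hL.1.spectral_theorem
    simpa using this.symm
  have hSsym : Sᵀ = S := by
    rw [hSdef]
    simp [transpose_mul, star_eq_conjTranspose, conjTranspose_eq_transpose_of_trivial,
      Matrix.mul_assoc]
  have hSdet : IsUnit S.det := by
    have h2 : S.det * S.det = L.det := by rw [← det_mul, hSS]
    have := hL.det_pos
    refine isUnit_iff_ne_zero.mpr fun h => ?_
    rw [h, mul_zero] at h2
    linarith [h2 ▸ this]
  have hS1 : S⁻¹ * S = 1 := nonsing_inv_mul S hSdet
  have hS2 : S * S⁻¹ = 1 := mul_nonsing_inv S hSdet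
  have hSisym : (S⁻¹)ᵀ = S⁻¹ := by rw [transpose_nonsing_inv, hSsym]
  clear hSdef
  clear_value S
  have hLinv : L⁻¹ = S⁻¹ * S⁻¹ := by rw [← hSS, Matrix.mul_inv_rev]
  set C := S⁻¹ * A * S⁻¹ with hCdef
  -- conjugation identity
  have hLA : L⁻¹ * A = S⁻¹ * C * S := by
    rw [hLinv, hCdef]
    calc S⁻¹ * S⁻¹ * A = S⁻¹ * (S⁻¹ * A) * 1 := by rw [mul_one, Matrix.mul_assoc]
      _ = S⁻¹ * (S⁻¹ * A) * (S⁻¹ * S) := by rw [hS1]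
      _ = S⁻¹ * (S⁻¹ * A * S⁻¹) * S := by simp only [Matrix.mul_assoc]
  have hone : (1 : Matrix (Fin N) (Fin N) ℝ) - L⁻¹ * A = S⁻¹ * (1 - C) * S := by
    rw [hLA, Matrix.mul_sub, Matrix.sub_mul, Matrix.mul_one, hS1]
  have hpow : ∀ n : ℕ, (S⁻¹ * (1 - C) * S) ^ n = S⁻¹ * (1 - C) ^ n * S := by
    intro n
    induction n with
    | zero => simp [hS1]
    | succ n ih =>
        rw [pow_succ, pow_succ, ih]
        calc S⁻¹ * (1-C)^n * S * (S⁻¹ * (1-C) * S)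
            = S⁻¹ * (1-C)^n * (S * S⁻¹) * (1-C) * S := by simp only [Matrix.mul_assoc]
          _ = S⁻¹ * ((1-C)^n * (1-C)) * S := by rw [hS2]; simp only [Matrix.mul_assoc, Matrix.mul_one]
  set D := C * (1 - C) ^ ν with hDdef
  have hBconj : L⁻¹ * A * (1 - L⁻¹ * A) ^ ν = S⁻¹ * D * S := by
    rw [hone, hpow, hLA, hDdef]
    calc S⁻¹ * C * S * (S⁻¹ * (1-C)^ν * S)
        = S⁻¹ * C * (S * S⁻¹) * (1-C)^ν * S := by simp only [Matrix.mul_assoc]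
      _ = S⁻¹ * (C * (1-C)^ν) * S := by rw [hS2]; simp only [Matrix.mul_assoc, Matrix.mul_one]
  -- reduce to euclidean statement
  set y := S *ᵥ x with hy
  have hCsym : Cᵀ = C := by
    have hAsym : Aᵀ = A := by
      have := hA.1
      rwa [IsHermitian, conjTranspose_eq_transpose_of_trivial] at this
    rw [hCdef, transpose_mul, transpose_mul, hSisym, hAsym]
    simp only [Matrix.mul_assoc]
  have hComm : Commute C ((1 - C) ^ ν) :=
    (((Commute.one_right C).sub_right (Commute.refl C)).pow_right ν)
  have hDsym : Dᵀ = D := by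
    rw [hDdef, transpose_mul, transpose_pow, transpose_sub, transpose_one, hCsym]
    exact hComm.symm
  have hRHS : x ⬝ᵥ L *ᵥ x = y ⬝ᵥ y := by
    rw [← hSS, ← Matrix.mulVec_mulVec, dot_shift, hSsym, hy]
  have hLHS : ((L⁻¹ * A * (1 - L⁻¹ * A) ^ ν) *ᵥ x) ⬝ᵥ
      L *ᵥ ((L⁻¹ * A * (1 - L⁻¹ * A) ^ ν) *ᵥ x) = y ⬝ᵥ ((D * D) *ᵥ y) := by
    have hLB : L * (S⁻¹ * D * S) = S * (D * S) := by
      rw [← hSS]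
      calc S * S * (S⁻¹ * D * S) = S * (S * S⁻¹) * D * S := by simp only [Matrix.mul_assoc]
        _ = S * (D * S) := by rw [hS2]; simp only [Matrix.mul_assoc, Matrix.mul_one]
    have hSB : S * (S⁻¹ * D * S) = D * S := by
      calc S * (S⁻¹ * D * S) = (S * S⁻¹) * D * S := by simp only [Matrix.mul_assoc]
        _ = D * S := by rw [hS2, Matrix.one_mul]
    have e1 : L *ᵥ ((S⁻¹ * D * S) *ᵥ x) = S *ᵥ (D *ᵥ y) := by
      rw [Matrix.mulVec_mulVec, hLB, hy, Matrix.mulVec_mulVec, Matrix.mulVec_mulVec,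
        Matrix.mul_assoc]
      exact congrArg (fun M => M *ᵥ x) (by rw [hDdef]; simp only [Matrix.mul_assoc])
    rw [hBconj, e1, dot_shift, hSsym, Matrix.mulVec_mulVec, hSB,
      show (D * S) *ᵥ x = D *ᵥ y from by rw [hy, Matrix.mulVec_mulVec],
      dot_shift, hDsym, Matrix.mulVec_mulVec, dotProduct_comm]
  rw [hRHS, hLHS]
  -- spectral analysis of C
  have hCsd : C.PosSemidef := by
    have h := hA.posSemidef.conjTranspose_mul_mul_same S⁻¹
    rw [conjTranspose_eq_transpose_of_trivial, hSisym] at h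
    exact h
  have hCh : C.IsHermitian := hCsd.1
  set U : Matrix (Fin N) (Fin N) ℝ := (IsHermitian.eigenvectorUnitary hCh : Matrix (Fin N) (Fin N) ℝ) with hUdef
  have hU2 : U * star U = 1 := (mem_unitaryGroup_iff).mp (IsHermitian.eigenvectorUnitary hCh).2
  have hU1 : star U * U = 1 := (mem_unitaryGroup_iff').mp (IsHermitian.eigenvectorUnitary hCh).2
  set μ := hCh.eigenvalues with hμdef
  have hCspec : C = U * diagonal μ * star U := by
    have := hCh.spectral_theorem
    simpa using this
  have hμ0 : ∀ i, 0 ≤ μ i := hCsd.eigenvalues_nonneg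
  have hμ1 : ∀ i, μ i ≤ 1 := by
    have hIC : (1 - C).PosSemidef := by
      refine .of_dotProduct_mulVec_nonneg ?_ ?_
      · rw [IsHermitian, conjTranspose_sub, conjTranspose_one, hCh.eq]
      · intro z
        have h1 : star z ⬝ᵥ ((1 - C) *ᵥ z) = z ⬝ᵥ z - z ⬝ᵥ (C *ᵥ z) := by
          simp [Matrix.sub_mulVec, dotProduct_sub]
        have h2 : z ⬝ᵥ (C *ᵥ z) = (S⁻¹ *ᵥ z) ⬝ᵥ (A *ᵥ (S⁻¹ *ᵥ z)) := by
          rw [hCdef, ← Matrix.mulVec_mulVec, ← Matrix.mulVec_mulVec, dot_shift, hSisym]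
        have h3 : (S⁻¹ *ᵥ z) ⬝ᵥ (L *ᵥ (S⁻¹ *ᵥ z)) = z ⬝ᵥ z := by
          have hLS : L * S⁻¹ = S := by
            rw [← hSS]
            calc S * S * S⁻¹ = S * (S * S⁻¹) := by rw [Matrix.mul_assoc]
              _ = S := by rw [hS2, Matrix.mul_one]
          rw [Matrix.mulVec_mulVec, hLS, dot_shift, hSsym, Matrix.mulVec_mulVec, hS2,
            Matrix.one_mulVec]
        have := hAL (S⁻¹ *ᵥ z)
        rw [h1]
        have h4 : z ⬝ᵥ (C *ᵥ z) ≤ z ⬝ᵥ z := by rw [h2, ← h3]; exact this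
        linarith
    intro i
    have hv := hCh.mulVec_eigenvectorBasis i
    set v : Fin N → ℝ := ⇑(hCh.eigenvectorBasis i) with hvdef
    have hvv : v ⬝ᵥ v = 1 := by
      have hnorm := hCh.eigenvectorBasis.orthonormal.1 i
      have : v ⬝ᵥ v = ‖hCh.eigenvectorBasis i‖ ^ 2 := by
        rw [← real_inner_self_eq_norm_sq]
        simp only [hvdef, PiLp.inner_apply, dotProduct, RCLike.inner_apply, mul_comm, conj_trivial]
      rw [this, hnorm]; norm_num
    have h0 := hIC.dotProduct_mulVec_nonneg v
    have : star v ⬝ᵥ ((1 - C) *ᵥ v) = 1 - μ i := by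
      rw [Matrix.sub_mulVec, Matrix.one_mulVec]
      simp only [star_trivial, dotProduct_sub, hvv]
      rw [hv]
      simp [dotProduct_smul, hvv, smul_eq_mul, hμdef]
    rw [this] at h0
    linarith
  -- diagonalize D
  set f : Fin N → ℝ := fun i => μ i * (1 - μ i) ^ ν with hfdef
  set c : ℝ := 1 / ((ν : ℝ) + 1) with hcdef
  have hone' : (1 : Matrix (Fin N) (Fin N) ℝ) = U * diagonal (fun _ => (1:ℝ)) * star U := by
    rw [diagonal_one, Matrix.mul_one, hU2]
  have hsub : (1 : Matrix (Fin N) (Fin N) ℝ) - C = U * diagonal (fun i => 1 - μ i) * star U := by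
    rw [hCspec]
    conv_lhs => rw [hone']
    rw [← Matrix.sub_mul, ← Matrix.mul_sub, diagonal_sub]
  have hDspec : D = U * diagonal f * star U := by
    rw [hDdef, hsub, hCspec, udiag_pow U hU1 hU2, udiag_mul U hU1]
  have hD2 : D * D = U * diagonal (fun i => f i * f i) * star U := by
    rw [hDspec, udiag_mul U hU1]
  -- positivity of c^2 - f^2
  have hfc : ∀ i, 0 ≤ f i ∧ f i ≤ c := by
    intro i
    constructor
    · have : (0:ℝ) ≤ (1 - μ i) ^ ν := pow_nonneg (by linarith [hμ1 i]) ν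
      exact mul_nonneg (hμ0 i) this
    · exact scalar_key ν (hμ0 i) (hμ1 i)
  have hg : ∀ i, 0 ≤ c^2 - f i * f i := by
    intro i
    obtain ⟨h1, h2⟩ := hfc i
    nlinarith
  have hc1 : c^2 • (1 : Matrix (Fin N) (Fin N) ℝ) = U * diagonal (fun _ => c^2) * star U := by
    have hd : diagonal (fun _ : Fin N => c^2) = c^2 • (1 : Matrix (Fin N) (Fin N) ℝ) := by
      ext i j
      rcases eq_or_ne i j with h | h <;> simp [h, Matrix.one_apply]
    rw [hd, Matrix.mul_smul, Matrix.smul_mul, Matrix.mul_one, hU2]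
  have hXeq : c^2 • (1 : Matrix (Fin N) (Fin N) ℝ) - D * D
      = U * diagonal (fun i => c^2 - f i * f i) * star U := by
    rw [hD2, hc1, ← Matrix.sub_mul, ← Matrix.mul_sub, ← diagonal_sub]
  have hXps : (c^2 • (1 : Matrix (Fin N) (Fin N) ℝ) - D * D).PosSemidef := by
    rw [hXeq]
    have := (posSemidef_diagonal_iff.mpr hg).mul_mul_conjTranspose_same U
    rwa [← star_eq_conjTranspose] at this
  have h0 := hXps.dotProduct_mulVec_nonneg y
  have hexp : star y ⬝ᵥ ((c^2 • (1 : Matrix (Fin N) (Fin N) ℝ) - D * D) *ᵥ y)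
      = c^2 * (y ⬝ᵥ y) - y ⬝ᵥ ((D * D) *ᵥ y) := by
    rw [Matrix.sub_mulVec]
    simp [dotProduct_sub, Matrix.smul_mulVec, Matrix.one_mulVec, dotProduct_smul,
      smul_eq_mul]
  rw [hexp] at h0
  have : ((1:ℝ) / (↑ν + 1))^2 = c^2 := by rw [hcdef]
  rw [this]
  linarith

end Main


/-- Smoothing property: if `A` and `L` are symmetric positive definite with
`A ≤ L` in the Loewner order, then for every `ν ≥ 0` the iteration matrix
`B = L⁻¹ A (I - L⁻¹ A)^ν` satisfies `‖B x‖_L ≤ (ν+1)⁻¹ ‖x‖_L` for all `x`,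
i.e. `‖L⁻¹ A (I - L⁻¹A)^ν‖_L ≤ 1/(ν+1)`. -/
theorem smoothing_property {N : ℕ} (A L : Matrix (Fin N) (Fin N) ℝ)
    (hA : A.PosDef) (hL : L.PosDef)
    (hAL : ∀ x : Fin N → ℝ, x ⬝ᵥ A.mulVec x ≤ x ⬝ᵥ L.mulVec x)
    (ν : ℕ) :
    ∀ x : Fin N → ℝ,
      ((L⁻¹ * A * (1 - L⁻¹ * A) ^ ν).mulVec x) ⬝ᵥ
          L.mulVec ((L⁻¹ * A * (1 - L⁻¹ * A) ^ ν).mulVec x)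
        ≤ (1 / (ν + 1 : ℝ))^2 * (x ⬝ᵥ L.mulVec x) :=
  smoothing_property_aux A L hA hL hAL ν
end

section
/- Let A_ℓ be symmetric positive definite, P a full-rank prolongation, A_{ℓ-1} = PᵀA_ℓP, and M_ℓ symmetric positive definite. Suppose the approximation-property estimate ‖(I − P A_{ℓ-1}^{-1} Pᵀ A_ℓ) u‖_{A_ℓ}² ≤ c ‖u‖_{A_ℓ M_ℓ^{-1} A_ℓ}² holds for all u, where ‖u‖_{A M^{-1} A}² = uᵀ A M^{-1} A u. Then ‖(I − P A_{ℓ-1}^{-1} Pᵀ A_ℓ) u‖_{M_ℓ}² ≤ c ‖u‖_{A_ℓ}² for all u, i.e., the estimate 'flips' from an (A, A M^{-1} A)-bound to an (M, A)-bound. -/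
/-!
Write `w = E u`, `t = wᵀ M w` and `v = A⁻¹ M w`. Then `‖v‖²_{A M⁻¹ A} = t`, and since `E` is
self-adjoint for the `A`-inner product, `⟨u, E v⟩_A = ⟨E u, v⟩_A = t`. Cauchy–Schwarz in the
`A`-inner product together with the hypothesis at `v` gives `t² ≤ ‖u‖²_A ‖E v‖²_A ≤ c ‖u‖²_A t`,
hence `t ≤ c ‖u‖²_A`.
-/

open Matrix

theorem le_of_sq_le_mul {a t : ℝ} (ha : 0 ≤ a) (h : t ^ 2 ≤ a * t) : t ≤ a := by
  rcases le_or_gt t 0 with ht | ht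
  · exact ht.trans ha
  · exact le_of_mul_le_mul_right (by nlinarith) ht

namespace Matrix

variable {n m α : Type*} [Fintype n]

theorem IsSymm.transpose_mul_mul [CommSemiring α] {A : Matrix n n α} (hA : A.IsSymm)
    (P : Matrix n m α) : (Pᵀ * A * P).IsSymm := by
  simp only [IsSymm, transpose_mul, transpose_transpose, hA.eq, Matrix.mul_assoc]

theorem transpose_one_sub_mul_mul_eq [Fintype m] [CommRing α] [DecidableEq n] {A : Matrix n n α}
    (hA : A.IsSymm) (P : Matrix n m α) {X : Matrix m m α} (hX : X.IsSymm) :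
    (1 - P * X * Pᵀ * A)ᵀ * A = A * (1 - P * X * Pᵀ * A) := by
  simp only [transpose_sub, transpose_one, transpose_mul, transpose_transpose, hA.eq, hX.eq,
    sub_mul, mul_sub, one_mul, mul_one, Matrix.mul_assoc]

theorem PosSemidef.dotProduct_mulVec_sq_le {A : Matrix n n ℝ} (hA : A.PosSemidef) (x y : n → ℝ) :
    (x ⬝ᵥ A *ᵥ y) ^ 2 ≤ (x ⬝ᵥ A *ᵥ x) * (y ⬝ᵥ A *ᵥ y) := by
  classical
  have hsymm : (toLinearMap₂' ℝ A).IsSymm := by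
    refine LinearMap.isSymm_def.mpr fun x y => ?_
    simp only [toLinearMap₂'_apply', RingHom.id_apply, dotProduct_mulVec x, ← mulVec_transpose,
      (isHermitian_iff_isSymm.mp hA.isHermitian).eq, dotProduct_comm]
  have hnonneg (x : n → ℝ) : 0 ≤ toLinearMap₂' ℝ A x x := by
    simpa only [toLinearMap₂'_apply', star_trivial] using hA.dotProduct_mulVec_nonneg x
  simpa only [toLinearMap₂'_apply'] using
    LinearMap.BilinForm.apply_sq_le_of_symm _ hnonneg hsymm x y

theorem PosDef.approximation_property_flip_of_transpose_mul_eq [DecidableEq n]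
    {A M E : Matrix n n ℝ} (hA : A.PosDef) (hM : IsUnit M.det) (hE : Eᵀ * A = A * E)
    {c : ℝ} (hc : 0 ≤ c)
    (h : ∀ u, (E *ᵥ u) ⬝ᵥ A *ᵥ (E *ᵥ u) ≤ c * (u ⬝ᵥ (A * M⁻¹ * A) *ᵥ u)) (u : n → ℝ) :
    (E *ᵥ u) ⬝ᵥ M *ᵥ (E *ᵥ u) ≤ c * (u ⬝ᵥ A *ᵥ u) := by
  have hAT : Aᵀ = A := (isHermitian_iff_isSymm.mp hA.isHermitian).eq
  set w := E *ᵥ u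
  set v := A⁻¹ *ᵥ M *ᵥ w
  have hAv : A *ᵥ v = M *ᵥ w := by
    rw [mulVec_mulVec, mul_nonsing_inv A ((isUnit_iff_isUnit_det A).mp hA.isUnit), one_mulVec]
  have hv : v ⬝ᵥ (A * M⁻¹ * A) *ᵥ v = w ⬝ᵥ M *ᵥ w := by
    have hMw : M⁻¹ *ᵥ M *ᵥ w = w := by rw [mulVec_mulVec, nonsing_inv_mul M hM, one_mulVec]
    rw [← mulVec_mulVec, hAv, ← mulVec_mulVec, hMw, ← dotProduct_transpose_mulVec, hAT, hAv]
  have hu : u ⬝ᵥ A *ᵥ (E *ᵥ v) = w ⬝ᵥ M *ᵥ w := by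
    rw [mulVec_mulVec, ← hE, ← mulVec_mulVec, hAv, dotProduct_transpose_mulVec, dotProduct_comm]
  have hu_nonneg : 0 ≤ u ⬝ᵥ A *ᵥ u := by
    simpa only [star_trivial] using hA.posSemidef.dotProduct_mulVec_nonneg u
  refine le_of_sq_le_mul (mul_nonneg hc hu_nonneg) ?_
  calc (w ⬝ᵥ M *ᵥ w) ^ 2 = (u ⬝ᵥ A *ᵥ (E *ᵥ v)) ^ 2 := by rw [hu]
    _ ≤ (u ⬝ᵥ A *ᵥ u) * ((E *ᵥ v) ⬝ᵥ A *ᵥ (E *ᵥ v)) := hA.posSemidef.dotProduct_mulVec_sq_le _ _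
    _ ≤ (u ⬝ᵥ A *ᵥ u) * (c * (w ⬝ᵥ M *ᵥ w)) := by gcongr; exact hv ▸ h v
    _ = c * (u ⬝ᵥ A *ᵥ u) * (w ⬝ᵥ M *ᵥ w) := by ring

end Matrix

theorem approximation_property_flip_general {N Nc : ℕ}
    (A M : Matrix (Fin N) (Fin N) ℝ) (hA : A.PosDef) (hM : M.PosDef)
    (P : Matrix (Fin N) (Fin Nc) ℝ)
    (c : ℝ) (hc : 0 ≤ c)
    (hyp : ∀ u : Fin N → ℝ,
      ((1 - P * (Pᵀ * A * P)⁻¹ * Pᵀ * A).mulVec u) ⬝ᵥ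
          A.mulVec ((1 - P * (Pᵀ * A * P)⁻¹ * Pᵀ * A).mulVec u)
        ≤ c * (u ⬝ᵥ (A * M⁻¹ * A).mulVec u)) :
    ∀ u : Fin N → ℝ,
      ((1 - P * (Pᵀ * A * P)⁻¹ * Pᵀ * A).mulVec u) ⬝ᵥ
          M.mulVec ((1 - P * (Pᵀ * A * P)⁻¹ * Pᵀ * A).mulVec u)
        ≤ c * (u ⬝ᵥ A.mulVec u) := by
  have hA_symm : A.IsSymm := isHermitian_iff_isSymm.mp hA.isHermitian
  have hE := transpose_one_sub_mul_mul_eq hA_symm P (hA_symm.transpose_mul_mul P).inv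
  exact hA.approximation_property_flip_of_transpose_mul_eq
    ((isUnit_iff_isUnit_det M).mp hM.isUnit) hE hc hyp

/-- Flipping the approximation-property estimate: with
`E = I − P A_c⁻¹ Pᵀ A` the coarse-grid correction (where `A_c = PᵀAP` and `P`
has full column rank), an estimate `‖E u‖_A² ≤ c ‖u‖_{A M⁻¹ A}²` for all `u`
implies `‖E u‖_M² ≤ c ‖u‖_A²` for all `u`. -/
theorem approximation_property_flip {N Nc : ℕ}
    (A M : Matrix (Fin N) (Fin N) ℝ) (hA : A.PosDef) (hM : M.PosDef)
    (P : Matrix (Fin N) (Fin Nc) ℝ) (hP : Function.Injective P.mulVec)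
    (c : ℝ) (hc : 0 ≤ c)
    (hyp : ∀ u : Fin N → ℝ,
      ((1 - P * (Pᵀ * A * P)⁻¹ * Pᵀ * A).mulVec u) ⬝ᵥ
          A.mulVec ((1 - P * (Pᵀ * A * P)⁻¹ * Pᵀ * A).mulVec u)
        ≤ c * (u ⬝ᵥ (A * M⁻¹ * A).mulVec u)) :
    ∀ u : Fin N → ℝ,
      ((1 - P * (Pᵀ * A * P)⁻¹ * Pᵀ * A).mulVec u) ⬝ᵥ
          M.mulVec ((1 - P * (Pᵀ * A * P)⁻¹ * Pᵀ * A).mulVec u)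
        ≤ c * (u ⬝ᵥ A.mulVec u) :=
  approximation_property_flip_general A M hA hM P c hc hyp
end
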